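/- arXiv:2307.05822 — 3 statements merged into one kernel-verified Lean document; each statement's English description precedes it below -/
import Mathlib

section
/- Let Ω ⊂ ℝⁿ be a convex open set, let u : Ω → ℝ be differentiable, and suppose the concavity function C_u attains a local maximum at an interior point (x₁, x₃, λ) ∈ Ω × Ω × (0,1), i.e. λ ∈ (0,1), x₁, x₃ ∈ Ω and x₂ := λx₃ + (1−λ)x₁ ∈ Ω. Then the gradients of u at the three points coincide: Du(x₁) = Du(x₂) = Du(x₃). -/
open Set

/-!
Fixing two of the three arguments of the concavity function `C_u` at a local maximum leaves a
local maximum in the remaining point. Varying `x₁` alone, the derivative of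
`x ↦ u(λx₃ + (1-λ)x) - (1-λ)u(x)` is `(1-λ)(Du(x₂) - Du(x₁))`, which must vanish; since `λ < 1`
this gives `Du(x₁) = Du(x₂)`. Varying `x₃` gives `λ(Du(x₂) - Du(x₃)) = 0` in the same way.
-/

section

variable {E : Type*} [NormedAddCommGroup E] [NormedSpace ℝ E]

def concavityFunction (u : E → ℝ) (p : E × E × ℝ) : ℝ :=
  u (p.2.2 • p.2.1 + (1 - p.2.2) • p.1) - p.2.2 * u p.2.1 - (1 - p.2.2) * u p.1

theorem fderiv_eq_of_isLocalMax_sub_smul {u : E → ℝ} {a x₀ : E} {c : ℝ} (hc : c ≠ 0)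
    (hx₀ : DifferentiableAt ℝ u x₀) (hy : DifferentiableAt ℝ u (a + c • x₀))
    (hmax : IsLocalMax (fun x => u (a + c • x) - c * u x) x₀) :
    fderiv ℝ u x₀ = fderiv ℝ u (a + c • x₀) := by
  have hinner : HasFDerivAt (fun x : E => a + c • x) (c • ContinuousLinearMap.id ℝ E) x₀ :=
    ((hasFDerivAt_id x₀).const_smul c).const_add a
  have hzero := hmax.hasFDerivAt_eq_zero
    ((hy.hasFDerivAt.comp x₀ hinner).sub (hx₀.hasFDerivAt.const_mul c))
  ext v
  have hv := DFunLike.congr_fun hzero v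
  simp only [sub_apply, ContinuousLinearMap.comp_apply, smul_apply, ContinuousLinearMap.id_apply,
    zero_apply, map_smul, smul_eq_mul, ← mul_sub, mul_eq_zero, hc, false_or, sub_eq_zero] at hv
  exact hv.symm

variable {u : E → ℝ} {x₁ x₃ : E} {lam : ℝ}

theorem IsLocalMax.concavityFunction_left (h : IsLocalMax (concavityFunction u) (x₁, x₃, lam)) :
    IsLocalMax (fun x => u (lam • x₃ + (1 - lam) • x) - (1 - lam) * u x) x₁ := by
  have hrestrict : IsLocalMax (concavityFunction u ∘ fun x => (x, x₃, lam)) x₁ :=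
    IsLocalMax.comp_continuous (g := fun x => (x, x₃, lam)) h (by fun_prop)
  have heq : (fun x => u (lam • x₃ + (1 - lam) • x) - (1 - lam) * u x) =
      (concavityFunction u ∘ fun x => (x, x₃, lam)) + fun _ => lam * u x₃ := by
    ext x
    simp only [Pi.add_apply, Function.comp_apply, concavityFunction]
    ring
  exact heq ▸ hrestrict.add isLocalMax_const

theorem IsLocalMax.concavityFunction_right (h : IsLocalMax (concavityFunction u) (x₁, x₃, lam)) :
    IsLocalMax (fun x => u ((1 - lam) • x₁ + lam • x) - lam * u x) x₃ := by
  have hrestrict : IsLocalMax (concavityFunction u ∘ fun x => (x₁, x, lam)) x₃ :=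
    IsLocalMax.comp_continuous (g := fun x => (x₁, x, lam)) h (by fun_prop)
  have heq : (fun x => u ((1 - lam) • x₁ + lam • x) - lam * u x) =
      (concavityFunction u ∘ fun x => (x₁, x, lam)) + fun _ => (1 - lam) * u x₁ := by
    ext x
    simp only [Pi.add_apply, Function.comp_apply, concavityFunction, add_comm ((1 - lam) • x₁)]
    ring
  exact heq ▸ hrestrict.add isLocalMax_const

end

theorem stmt0_general {n : ℕ} (Ω : Set (EuclideanSpace ℝ (Fin n)))
    (hΩo : IsOpen Ω)
    (u : EuclideanSpace ℝ (Fin n) → ℝ) (hu : DifferentiableOn ℝ u Ω)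
    (x₁ x₃ : EuclideanSpace ℝ (Fin n)) (lam : ℝ)
    (hx₁ : x₁ ∈ Ω) (hx₃ : x₃ ∈ Ω) (hlam : lam ∈ Ioo (0 : ℝ) 1)
    (hx₂ : lam • x₃ + (1 - lam) • x₁ ∈ Ω)
    (hmax : IsLocalMax
      (fun p : EuclideanSpace ℝ (Fin n) × EuclideanSpace ℝ (Fin n) × ℝ =>
        u (p.2.2 • p.2.1 + (1 - p.2.2) • p.1) - p.2.2 * u p.2.1 - (1 - p.2.2) * u p.1)
      (x₁, x₃, lam)) :
    gradient u x₁ = gradient u (lam • x₃ + (1 - lam) • x₁) ∧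
      gradient u x₃ = gradient u (lam • x₃ + (1 - lam) • x₁) := by
  have hd {x} (hx : x ∈ Ω) : DifferentiableAt ℝ u x := (hu x hx).differentiableAt (hΩo.mem_nhds hx)
  have hmax' : IsLocalMax (concavityFunction u) (x₁, x₃, lam) := hmax
  have h₁ := fderiv_eq_of_isLocalMax_sub_smul (sub_ne_zero.2 hlam.2.ne') (hd hx₁) (hd hx₂)
    hmax'.concavityFunction_left
  have h₃ := fderiv_eq_of_isLocalMax_sub_smul hlam.1.ne' (hd hx₃) (by rw [add_comm]; exact hd hx₂)
    hmax'.concavityFunction_right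
  rw [add_comm] at h₃
  simp only [gradient, h₁, h₃, and_self]

/-- If the concavity function
`C_u(x₁,x₃,λ) = u(λx₃+(1−λ)x₁) − λu(x₃) − (1−λ)u(x₁)` of a differentiable
function `u` on a convex open set `Ω ⊆ ℝⁿ` attains a local maximum at an
interior point `(x₁,x₃,λ) ∈ Ω × Ω × (0,1)` (with `x₂ := λx₃+(1−λ)x₁ ∈ Ω`),
then the gradients of `u` at `x₁`, `x₂`, `x₃` coincide. -/
theorem stmt0 {n : ℕ} (Ω : Set (EuclideanSpace ℝ (Fin n)))
    (hΩo : IsOpen Ω) (hΩc : Convex ℝ Ω)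
    (u : EuclideanSpace ℝ (Fin n) → ℝ) (hu : DifferentiableOn ℝ u Ω)
    (x₁ x₃ : EuclideanSpace ℝ (Fin n)) (lam : ℝ)
    (hx₁ : x₁ ∈ Ω) (hx₃ : x₃ ∈ Ω) (hlam : lam ∈ Ioo (0 : ℝ) 1)
    (hx₂ : lam • x₃ + (1 - lam) • x₁ ∈ Ω)
    (hmax : IsLocalMax
      (fun p : EuclideanSpace ℝ (Fin n) × EuclideanSpace ℝ (Fin n) × ℝ =>
        u (p.2.2 • p.2.1 + (1 - p.2.2) • p.1) - p.2.2 * u p.2.1 - (1 - p.2.2) * u p.1)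
      (x₁, x₃, lam)) :
    gradient u x₁ = gradient u (lam • x₃ + (1 - lam) • x₁) ∧
      gradient u x₃ = gradient u (lam • x₃ + (1 - lam) • x₁) :=
  stmt0_general Ω hΩo u hu x₁ x₃ lam hx₁ hx₃ hlam hx₂ hmax
end

section
/- (Hyers–Ulam.) Let X be a finite-dimensional real normed vector space, with n = dim(X), and let D ⊆ X be a convex set. Assume f : D → ℝ is δ-convex, i.e. f(λ x₃ + (1−λ) x₁) − λ f(x₃) − (1−λ) f(x₁) ≤ δ for all x₁, x₃ ∈ D and λ ∈ [0,1]. Then there exists a constant k_n > 0 depending only on n and a convex function g : D → ℝ such that sup_{x ∈ D} |f(x) − g(x)| ≤ δ k_n. -/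
open Set

lemma jensen_defect {X : Type} [NormedAddCommGroup X] [NormedSpace ℝ X]
    {D : Set X} (hD : Convex ℝ D) {f : X → ℝ} {δ : ℝ} (hδ : 0 ≤ δ)
    (hf : ∀ x₁ ∈ D, ∀ x₃ ∈ D, ∀ t ∈ Icc (0:ℝ) 1,
      f (t • x₃ + (1-t) • x₁) - t * f x₃ - (1-t) * f x₁ ≤ δ)
    {ι : Type} (t : Finset ι) (p : ι → X) :
    ∀ w : ι → ℝ, (∀ i ∈ t, p i ∈ D) → (∀ i ∈ t, 0 ≤ w i) → ∑ i ∈ t, w i = 1 →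
    f (∑ i ∈ t, w i • p i) ≤ ∑ i ∈ t, w i * f (p i) + ((t.card : ℝ) - 1) * δ := by
  induction t using Finset.cons_induction with
  | empty => intro w _ _ hw1; simp at hw1
  | cons a s ha ih =>
    intro w hp hw hw1
    have hwa : 0 ≤ w a := hw a (Finset.mem_cons_self a s)
    have hws : ∀ i ∈ s, 0 ≤ w i := fun i hi => hw i (Finset.mem_cons_of_mem hi)
    have hsum : w a + ∑ i ∈ s, w i = 1 := by
      rw [← Finset.sum_cons ha]; exact hw1
    set c : ℝ := ∑ i ∈ s, w i with hc
    have hc0 : 0 ≤ c := Finset.sum_nonneg hws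
    have hcard : (1:ℝ) ≤ (Finset.cons a s ha).card := by
      exact_mod_cast Finset.card_pos.mpr ⟨a, Finset.mem_cons_self a s⟩
    rcases eq_or_lt_of_le hc0 with hceq | hcpos
    · -- c = 0: all weights in s are zero, w a = 1
      have hz : ∀ i ∈ s, w i = 0 := fun i hi =>
        (Finset.sum_eq_zero_iff_of_nonneg hws).mp hceq.symm i hi
      have hwa1 : w a = 1 := by rw [← hceq] at hsum; linarith
      have hs0 : ∑ i ∈ s, w i • p i = 0 :=
        Finset.sum_eq_zero (fun i hi => by rw [hz i hi, zero_smul])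
      have hsf : ∑ i ∈ s, w i * f (p i) = 0 :=
        Finset.sum_eq_zero (fun i hi => by rw [hz i hi, zero_mul])
      rw [Finset.sum_cons, Finset.sum_cons, hs0, hsf, hwa1]
      simp only [one_smul, add_zero, one_mul]
      nlinarith [mul_nonneg (sub_nonneg.mpr hcard) hδ]
    · -- c > 0
      have hsne : s.Nonempty := by
        by_contra h
        rw [Finset.not_nonempty_iff_eq_empty] at h
        rw [h, Finset.sum_empty] at hc
        rw [hc] at hcpos; exact lt_irrefl _ hcpos
      have hscard : (1:ℝ) ≤ s.card := by exact_mod_cast Finset.card_pos.mpr hsne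
      have hc1 : c ≤ 1 := by linarith
      set y : X := ∑ i ∈ s, (w i / c) • p i with hy
      have hsumdiv : ∑ i ∈ s, w i / c = 1 := by
        rw [← Finset.sum_div, ← hc, div_self (ne_of_gt hcpos)]
      have hyD : y ∈ D :=
        hD.sum_mem (fun i hi => div_nonneg (hws i hi) hc0) hsumdiv
          (fun i hi => hp i (Finset.mem_cons_of_mem hi))
      have hcomb : ∑ i ∈ Finset.cons a s ha, w i • p i = w a • p a + c • y := by
        rw [Finset.sum_cons]
        congr 1
        rw [hy, Finset.smul_sum]
        exact Finset.sum_congr rfl fun i hi => by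
          rw [smul_smul, mul_div_cancel₀ _ (ne_of_gt hcpos)]
      have hkey := hf y hyD (p a) (hp a (Finset.mem_cons_self a s)) (w a) ⟨hwa, by linarith⟩
      rw [show (1 : ℝ) - w a = c from by linarith] at hkey
      have hfy := ih (fun i => w i / c) (fun i hi => hp i (Finset.mem_cons_of_mem hi))
        (fun i hi => div_nonneg (hws i hi) hc0) hsumdiv
      have hmul : c * f y ≤ ∑ i ∈ s, w i * f (p i) + c * (((s.card : ℝ) - 1) * δ) := by
        have := mul_le_mul_of_nonneg_left hfy hc0
        rw [mul_add, Finset.mul_sum] at this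
        calc c * f y ≤ ∑ i ∈ s, c * (w i / c * f (p i)) + c * (((s.card:ℝ) - 1) * δ) := this
          _ = ∑ i ∈ s, w i * f (p i) + c * (((s.card:ℝ) - 1) * δ) := by
              congr 1
              exact Finset.sum_congr rfl fun i hi => by
                field_simp
      have hcd : c * (((s.card:ℝ) - 1) * δ) ≤ ((s.card:ℝ) - 1) * δ := by
        nlinarith [mul_nonneg (sub_nonneg.mpr hscard) hδ]
      rw [hcomb, Finset.sum_cons, Finset.card_cons]
      push_cast
      linarith

/-- Hyers–Ulam: for every `n` there is a constant `k_n > 0` such that for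
every finite-dimensional real normed space `X` with `dim X = n`, every convex `D ⊆ X`
and every `δ`-convex function `f : D → ℝ` (i.e. the concavity-type defect of convexity
is at most `δ`), there exists a convex function `g : D → ℝ` with
`sup_{x ∈ D} |f(x) − g(x)| ≤ δ k_n`. -/
theorem stmt8 (n : ℕ) :
    ∃ k : ℝ, 0 < k ∧
      ∀ (X : Type) [NormedAddCommGroup X] [NormedSpace ℝ X] [FiniteDimensional ℝ X],
        Module.finrank ℝ X = n →
        ∀ (D : Set X) (f : X → ℝ) (δ : ℝ), Convex ℝ D →
          (∀ x₁ ∈ D, ∀ x₃ ∈ D, ∀ t ∈ Icc (0 : ℝ) 1,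
            f (t • x₃ + (1 - t) • x₁) - t * f x₃ - (1 - t) * f x₁ ≤ δ) →
          ∃ g : X → ℝ, ConvexOn ℝ D g ∧ ∀ x ∈ D, |f x - g x| ≤ δ * k := by
  refine ⟨(n : ℝ) + 2, by positivity, ?_⟩
  intro X _ _ _ hX D f δ hD hf
  rcases D.eq_empty_or_nonempty with rfl | ⟨x₀, hx₀⟩
  · exact ⟨f, ⟨convex_empty, fun x hx => absurd hx (notMem_empty x)⟩,
      fun x hx => absurd hx (notMem_empty x)⟩
  have hδ : 0 ≤ δ := by
    have := hf x₀ hx₀ x₀ hx₀ 0 ⟨le_refl 0, zero_le_one⟩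
    simp at this
    linarith
  -- The convex hull of the graph of f over D
  set C : Set (X × ℝ) := convexHull ℝ ((fun y => (y, f y)) '' D) with hC
  set S : X → Set ℝ := fun x => {v | (x, v) ∈ C} with hS
  -- Key lower bound via Carathéodory
  have hrank : Module.finrank ℝ (X × ℝ) = n + 1 := by
    rw [Module.finrank_prod, hX, Module.finrank_self]
  have key : ∀ x v, (x, v) ∈ C → f x - ((n : ℝ) + 1) * δ ≤ v := by
    intro x v hxv
    obtain ⟨ι, hfin, z, w, hrange, haff, hwpos, hwsum, hzsum⟩ :=
      eq_pos_convex_span_of_mem_convexHull hxv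
    have hcard : (Fintype.card ι : ℝ) ≤ (n : ℝ) + 2 := by
      have h1 := haff.card_le_finrank_succ
      have h2 : Module.finrank ℝ (vectorSpan ℝ (Set.range z)) ≤ n + 1 := by
        rw [← hrank]; exact Submodule.finrank_le _
      exact_mod_cast h1.trans (by omega)
    have hz : ∀ i, (z i).1 ∈ D ∧ (z i).2 = f ((z i).1) := by
      intro i
      obtain ⟨y, hy, hyz⟩ := hrange (mem_range_self i)
      rw [← hyz]
      exact ⟨hy, rfl⟩
    have hx1 : ∑ i, w i • (z i).1 = x := by
      have := congrArg Prod.fst hzsum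
      simpa [Prod.fst_sum] using this
    have hv1 : ∑ i, w i * (z i).2 = v := by
      have := congrArg Prod.snd hzsum
      simpa [Prod.snd_sum, smul_eq_mul] using this
    have hj := jensen_defect hD hδ hf Finset.univ (fun i => (z i).1) w
      (fun i _ => (hz i).1) (fun i _ => (hwpos i).le) hwsum
    rw [hx1] at hj
    have hv2 : ∑ i, w i * f ((z i).1) = v := by
      rw [← hv1]
      exact Finset.sum_congr rfl fun i _ => by rw [(hz i).2]
    rw [hv2] at hj
    have hcd : (((Finset.univ : Finset ι).card : ℝ) - 1) * δ ≤ ((n : ℝ) + 1) * δ := by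
      have : ((Finset.univ : Finset ι).card : ℝ) = Fintype.card ι := by simp [Finset.card_univ]
      nlinarith
    linarith
  -- membership of graph points
  have hfx : ∀ x ∈ D, f x ∈ S x := fun x hx =>
    subset_convexHull ℝ _ (mem_image_of_mem _ hx)
  have hbdd : ∀ x, BddBelow (S x) := fun x =>
    ⟨f x - ((n : ℝ) + 1) * δ, fun v hv => key x v hv⟩
  set g : X → ℝ := fun x => sInf (S x) with hg
  have hgle : ∀ x ∈ D, g x ≤ f x := fun x hx => csInf_le (hbdd x) (hfx x hx)
  have hgge : ∀ x ∈ D, f x - ((n : ℝ) + 1) * δ ≤ g x := fun x hx =>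
    le_csInf ⟨f x, hfx x hx⟩ (fun v hv => key x v hv)
  have hCconv : Convex ℝ C := convex_convexHull ℝ _
  -- the two-point inequality for memberships
  have hmix : ∀ a ∈ D, ∀ b ∈ D, ∀ ta tb : ℝ, 0 ≤ ta → 0 ≤ tb → ta + tb = 1 →
      ∀ v ∈ S a, ∀ u ∈ S b, g (ta • a + tb • b) ≤ ta * v + tb * u := by
    intro a ha b hb ta tb hta htb htab v hv u hu
    have hmem : (ta • a + tb • b, ta * v + tb * u) ∈ C := by
      have := hCconv hv hu hta htb htab
      simpa [Prod.smul_mk, Prod.mk_add_mk, smul_eq_mul] using this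
    exact csInf_le (hbdd _) hmem
  refine ⟨g, ⟨hD, ?_⟩, ?_⟩
  · intro a ha b hb ta tb hta htb htab
    simp only [smul_eq_mul]
    rcases eq_or_lt_of_le hta with h0 | htapos
    · have htb1 : tb = 1 := by linarith
      simp [← h0, htb1]
    rcases eq_or_lt_of_le htb with h0 | htbpos
    · have hta1 : ta = 1 := by linarith
      simp [← h0, hta1]
    -- both positive
    have step1 : ∀ v ∈ S a, g (ta • a + tb • b) ≤ ta * v + tb * g b := by
      intro v hv
      have h2 : ∀ u ∈ S b, (g (ta • a + tb • b) - ta * v) / tb ≤ u := by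
        intro u hu
        rw [div_le_iff₀ htbpos]
        have := hmix a ha b hb ta tb hta htb htab v hv u hu
        linarith [mul_comm u tb]
      have h3 := le_csInf ⟨f b, hfx b hb⟩ h2
      rw [div_le_iff₀ htbpos] at h3
      linarith [mul_comm (g b) tb]
    have h4 : ∀ v ∈ S a, (g (ta • a + tb • b) - tb * g b) / ta ≤ v := by
      intro v hv
      rw [div_le_iff₀ htapos]
      have := step1 v hv
      linarith [mul_comm v ta]
    have h5 := le_csInf ⟨f a, hfx a ha⟩ h4
    rw [div_le_iff₀ htapos] at h5
    have : sInf (S a) = g a := rfl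
    linarith [mul_comm (g a) ta]
  · intro x hx
    rw [abs_le]
    constructor
    · have := hgle x hx; nlinarith
    · have := hgge x hx; nlinarith
end

section
/- Let K ⊆ ℝⁿ be a convex set, let f : K → ℝ satisfy 0 < m ≤ f(x) ≤ M for all x ∈ K, and let v : K → ℝ satisfy v(x) ≤ −υ for all x ∈ K, where υ > 0. Define b(x,s) := f(x)/(−s) for s < 0. Then for all x₁, x₃ ∈ K and λ ∈ [0,1], the harmonic concavity function of b along v satisfies the lower bound HC_{b(·,v(·))}(x₁,x₃,λ) ≥ (m² − M²)/(m υ). -/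
open Set

lemma stmt11_aux (m M υ f1 f2 f3 w1 w3 lam : ℝ) (hm : 0 < m) (hυ : 0 < υ)
    (hm1 : m ≤ f1) (hM1 : f1 ≤ M) (hm3 : m ≤ f3) (hM3 : f3 ≤ M) (hm2 : m ≤ f2)
    (hw1 : υ ≤ w1) (hw3 : υ ≤ w3) (hl0 : 0 ≤ lam) (hl1 : lam ≤ 1) :
    (m ^ 2 - M ^ 2) / (m * υ) ≤
      f2 / (lam * w3 + (1 - lam) * w1) -
        (f1 / w1) * (f3 / w3) / (lam * (f1 / w1) + (1 - lam) * (f3 / w3)) := by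
  have hmM : m ≤ M := le_trans hm1 hM1
  have hw1p : 0 < w1 := lt_of_lt_of_le hυ hw1
  have hw3p : 0 < w3 := lt_of_lt_of_le hυ hw3
  set W := lam * w3 + (1 - lam) * w1 with hWdef
  have hWυ : υ ≤ W := by nlinarith
  have hWp : 0 < W := lt_of_lt_of_le hυ hWυ
  set D := lam * f1 * w3 + (1 - lam) * f3 * w1 with hDdef
  have hD : m * W ≤ D := by
    nlinarith [mul_nonneg (mul_nonneg hl0 hw3p.le) (sub_nonneg.2 hm1),
      mul_nonneg (mul_nonneg (by linarith : (0:ℝ) ≤ 1 - lam) hw1p.le) (sub_nonneg.2 hm3)]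
  have hDp : 0 < D := lt_of_lt_of_le (by positivity) hD
  have hD0 : D ≠ 0 := hDp.ne'
  have hT2 : (f1 / w1) * (f3 / w3) / (lam * (f1 / w1) + (1 - lam) * (f3 / w3)) =
      f1 * f3 / D := by
    have hden : lam * (f1 / w1) + (1 - lam) * (f3 / w3) = D / (w1 * w3) := by
      rw [hDdef]; field_simp
    rw [hden]
    field_simp
  rw [hT2]
  have h1 : m / W ≤ f2 / W := by gcongr
  have h2 : f1 * f3 / D ≤ M ^ 2 / (m * W) := by
    apply div_le_div₀ (by positivity) (by nlinarith) (by positivity) hD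
  have h3 : (m ^ 2 - M ^ 2) / (m * υ) ≤ (m ^ 2 - M ^ 2) / (m * W) := by
    have h3' : (M ^ 2 - m ^ 2) / (m * W) ≤ (M ^ 2 - m ^ 2) / (m * υ) := by
      gcongr <;> nlinarith
    have e1 : (m ^ 2 - M ^ 2) / (m * υ) = -((M ^ 2 - m ^ 2) / (m * υ)) := by ring
    have e2 : (m ^ 2 - M ^ 2) / (m * W) = -((M ^ 2 - m ^ 2) / (m * W)) := by ring
    rw [e1, e2]
    linarith
  have h4 : (m ^ 2 - M ^ 2) / (m * W) = m / W - M ^ 2 / (m * W) := by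
    field_simp
  linarith

/-- let `K ⊆ ℝⁿ` be convex, `0 < m ≤ f ≤ M` on `K`, `v ≤ −υ < 0` on `K`,
and `b(x,s) := f(x)/(−s)`. Then for all `x₁, x₃ ∈ K` and `λ ∈ [0,1]`, the harmonic
concavity function of `b` along `v` is bounded below by `(m² − M²)/(m υ)`. -/
theorem stmt11 {n : ℕ} (K : Set (EuclideanSpace ℝ (Fin n))) (hK : Convex ℝ K)
    (f v : EuclideanSpace ℝ (Fin n) → ℝ) (m M υ : ℝ)
    (hm : 0 < m) (hf : ∀ x ∈ K, m ≤ f x ∧ f x ≤ M)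
    (hυ : 0 < υ) (hv : ∀ x ∈ K, v x ≤ -υ) :
    ∀ x₁ ∈ K, ∀ x₃ ∈ K, ∀ lam ∈ Icc (0 : ℝ) 1,
      (m ^ 2 - M ^ 2) / (m * υ) ≤
        f (lam • x₃ + (1 - lam) • x₁) / (-(lam * v x₃ + (1 - lam) * v x₁)) -
          (f x₁ / (-v x₁)) * (f x₃ / (-v x₃)) /
            (lam * (f x₁ / (-v x₁)) + (1 - lam) * (f x₃ / (-v x₃))) := by
  intro x₁ hx₁ x₃ hx₃ lam hlam
  obtain ⟨hl0, hl1⟩ := hlam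
  obtain ⟨hm1, hM1⟩ := hf x₁ hx₁
  obtain ⟨hm3, hM3⟩ := hf x₃ hx₃
  have hx₂ : lam • x₃ + (1 - lam) • x₁ ∈ K :=
    hK hx₃ hx₁ hl0 (by linarith) (by ring)
  obtain ⟨hm2, hM2⟩ := hf _ hx₂
  have hWeq : -(lam * v x₃ + (1 - lam) * v x₁) = lam * (-v x₃) + (1 - lam) * (-v x₁) := by
    ring
  rw [hWeq]
  exact stmt11_aux m M υ (f x₁) (f (lam • x₃ + (1 - lam) • x₁)) (f x₃) (-v x₁) (-v x₃) lam
    hm hυ hm1 hM1 hm3 hM3 hm2 (by linarith [hv x₁ hx₁]) (by linarith [hv x₃ hx₃]) hl0 hl1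
end
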